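/- arXiv:math/0310375 — 2 statements merged into one kernel-verified Lean document; each statement's English description precedes it below -/
import Mathlib

section
/- Let (V, ω) be a symplectic vector space of dimension 2n, r a symmetric bilinear form with associated endomorphism ρ (ω(X,ρY)=r(X,Y)), and define the curvature endomorphism R(X,Y)Z = -(1/(2(n+1)))[-2ω(X,Y) ρZ - ω(X,Z) ρY + ω(Y,Z) ρX - ω(ρY,Z) X + ω(ρX,Z) Y]. Then the Ricci tensor of R, defined by ric(X,Z) = tr(Y ↦ R(X,Y)Z), equals r. -/
/-!
Take the trace in `Y` term by term. Since `ω(X, ρZ) = r(X, Z)` is symmetric, `ρ` is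
`ω`-skew-adjoint, so `tr ρ = 0` and `ω(ρX, Z) = -r(X, Z)`. The terms `ω(Y,Z) ρX` and
`-ω(ρY,Z) X` contribute `±ω(ρX, Z)` and cancel, `-2ω(X,Y) ρZ` contributes `-2 r(X, Z)` and
`ω(ρX,Z) Y` contributes `2n ω(ρX, Z) = -2n r(X, Z)`; the prefactor `-1/(2(n+1))` normalises.
-/

open LinearMap Module

namespace LinearMap

variable {K V : Type*} [Field K] [AddCommGroup V] [Module K V] [FiniteDimensional K V]
  {B : V →ₗ[K] V →ₗ[K] K}

theorem IsAdjointPair.trace_eq (hB : B.SeparatingLeft) {f g : V →ₗ[K] V}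
    (h : IsAdjointPair B B f g) : trace K V f = trace K V g := by
  let e : V ≃ₗ[K] Dual K V := B.linearEquivOfInjective
    (ker_eq_bot.mp <| separatingLeft_iff_ker_eq_bot.mp hB) Subspace.dual_finrank_eq.symm
  have hconj : e.conj f = Dual.transpose g := by
    ext φ v
    obtain ⟨x, rfl⟩ := e.surjective φ
    change e (f (e.symm (e x))) v = e x (g v)
    rw [e.symm_apply_apply]
    exact h x v
  rw [← trace_conj' f e, hconj, trace_transpose']

theorem IsSkewAdjoint.trace_eq_zero [CharZero K] (hB : B.SeparatingLeft) {f : V →ₗ[K] V}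
    (h : IsSkewAdjoint B f) : trace K V f = 0 := by
  have := IsAdjointPair.trace_eq hB (g := -f) h
  rwa [map_neg, self_eq_neg] at this

theorem IsAlt.isSkewAdjoint_of_forall_apply_comm {R M : Type*} [CommRing R] [AddCommGroup M]
    [Module R M] {B : M →ₗ[R] M →ₗ[R] R} (hB : B.IsAlt) {f : M →ₗ[R] M}
    (hf : ∀ x y, B x (f y) = B y (f x)) : IsSkewAdjoint B f := fun x y => by
  rw [Pi.neg_apply, map_neg, ← hB.neg, hf]

end LinearMap

theorem stmt_3_general {V : Type*} [AddCommGroup V] [Module ℝ V] [FiniteDimensional ℝ V]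
    (n : ℕ) (hdim : Module.finrank ℝ V = 2 * n)
    (ω : V →ₗ[ℝ] V →ₗ[ℝ] ℝ)
    (halt : ∀ x, ω x x = 0)
    (hnd : ∀ x, (∀ y, ω x y = 0) → x = 0)
    (r : V →ₗ[ℝ] V →ₗ[ℝ] ℝ)
    (hsymm : ∀ x y, r x y = r y x)
    (ρ : V →ₗ[ℝ] V)
    (hρ : ∀ x y, ω x (ρ y) = r x y)
    (R : V →ₗ[ℝ] V →ₗ[ℝ] V →ₗ[ℝ] V)
    (hR : ∀ X Y Z, R X Y Z =
      (-(1 / (2 * ((n : ℝ) + 1)))) •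
        ((-(2 * ω X Y)) • ρ Z - ω X Z • ρ Y + ω Y Z • ρ X
          - ω (ρ Y) Z • X + ω (ρ X) Z • Y)) :
    ∀ X Z, LinearMap.trace ℝ V ((LinearMap.applyₗ Z).comp (R X)) = r X Z := by
  intro X Z
  have hskew : IsSkewAdjoint ω ρ :=
    IsAlt.isSkewAdjoint_of_forall_apply_comm halt fun x y => by rw [hρ, hρ, hsymm]
  have hricci : (applyₗ Z).comp (R X) = (-(1 / (2 * ((n : ℝ) + 1)))) •
      ((-2 : ℝ) • (ω X).smulRight (ρ Z) - ω X Z • ρ + (ω.flip Z).smulRight (ρ X)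
        - (ω.flip Z ∘ₗ ρ).smulRight X + ω (ρ X) Z • LinearMap.id) := by
    ext Y
    simp only [comp_apply, applyₗ_apply_apply, hR, LinearMap.smul_apply, LinearMap.sub_apply,
      LinearMap.add_apply, smulRight_apply, flip_apply, id_apply]
    module
  have hρX : ω (ρ X) Z = -r X Z := by rw [hskew X Z, Pi.neg_apply, map_neg, hρ]
  simp only [hricci, map_smul, map_add, map_sub, trace_smulRight, flip_apply, comp_apply,
    hskew.trace_eq_zero hnd, trace_id, hdim, hρX, hρ, smul_eq_mul]
  field_simp
  push_cast
  ring

/-- The Ricci contraction ric(X,Z) = tr(Y ↦ R(X,Y)Z) of the Ricci-type curvature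
endomorphism R built from ω and ρ equals the symmetric bilinear form r. -/
theorem stmt_3 {V : Type*} [AddCommGroup V] [Module ℝ V] [FiniteDimensional ℝ V]
    (n : ℕ) (hn : 1 ≤ n) (hdim : Module.finrank ℝ V = 2 * n)
    (ω : V →ₗ[ℝ] V →ₗ[ℝ] ℝ)
    (halt : ∀ x, ω x x = 0)
    (hnd : ∀ x, (∀ y, ω x y = 0) → x = 0)
    (r : V →ₗ[ℝ] V →ₗ[ℝ] ℝ)
    (hsymm : ∀ x y, r x y = r y x)
    (ρ : V →ₗ[ℝ] V)
    (hρ : ∀ x y, ω x (ρ y) = r x y)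
    (R : V →ₗ[ℝ] V →ₗ[ℝ] V →ₗ[ℝ] V)
    (hR : ∀ X Y Z, R X Y Z =
      (-(1 / (2 * ((n : ℝ) + 1)))) •
        ((-(2 * ω X Y)) • ρ Z - ω X Z • ρ Y + ω Y Z • ρ X
          - ω (ρ Y) Z • X + ω (ρ X) Z • Y)) :
    ∀ X Z, LinearMap.trace ℝ V ((LinearMap.applyₗ Z).comp (R X)) = r X Z :=
  stmt_3_general n hdim ω halt hnd r hsymm ρ hρ R hR
end

section
/- With k > 0, consider on R^{n+1} × R^{n+1} the set Σ = {(u,v) : -2k (u·v) = 1} and TS^n = {(u',v') : u'·u' = 1, u'·v' = 0}. The map π(u,v) = (u/‖u‖, ‖u‖(v + u/(2k‖u‖²))) is a well-defined surjection from Σ onto TS^n, and π(u,v) = π(u₁,v₁) if and only if (u₁,v₁) = (e^{kt}u, e^{-kt}v) for some t ∈ R. -/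
/-!
On `Σ` the correction term `u/(2k‖u‖²)` exactly cancels the component of `v` along `u`, so
`π(u,v)` is tangent to the sphere, and `(q₁, q₂ - q₁/(2k))` is a preimage of `(q₁, q₂)`.
Both components `u/‖u‖` and `‖u‖ v + u/(2k‖u‖)` are invariant under `(u, v) ↦ (c u, c⁻¹ v)` for
`c > 0`; conversely equal first components force `u' = c u` with `c = ‖u'‖/‖u‖`, and then equal
second components force `v' = c⁻¹ v`. Writing `c = e^{kt}` gives the flow of the statement.
-/

open RealInnerProductSpace

namespace SphereTangentProj

variable {E : Type*} [NormedAddCommGroup E] [InnerProductSpace ℝ E]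

noncomputable def proj (k : ℝ) (p : E × E) : E × E :=
  (‖p.1‖⁻¹ • p.1, ‖p.1‖ • (p.2 + (2 * k * ‖p.1‖ ^ 2)⁻¹ • p.1))

lemma ne_zero_of_constraint {k : ℝ} {u v : E} (h : -(2 * k) * ⟪u, v⟫ = 1) : u ≠ 0 := by
  rintro rfl
  simp at h

lemma inner_eq_of_constraint {k : ℝ} {u v : E} (h : -(2 * k) * ⟪u, v⟫ = 1) :
    ⟪u, v⟫ = -(2 * k)⁻¹ := by
  have hk : k ≠ 0 := by rintro rfl; simp at h
  field_simp
  linarith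

lemma proj_mem_tangent {k : ℝ} {u v : E} (h : -(2 * k) * ⟪u, v⟫ = 1) :
    ⟪(proj k (u, v)).1, (proj k (u, v)).1⟫ = 1 ∧ ⟪(proj k (u, v)).1, (proj k (u, v)).2⟫ = 0 := by
  have hu : ‖u‖ ≠ 0 := norm_ne_zero_iff.mpr (ne_zero_of_constraint h)
  constructor
  · simp only [proj, real_inner_self_eq_norm_sq, norm_smul, norm_inv, norm_norm]
    field_simp
  · simp only [proj, real_inner_smul_left, real_inner_smul_right, inner_add_right,
      real_inner_self_eq_norm_sq, inner_eq_of_constraint h]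
    field_simp
    ring

lemma constraint_preimage {k : ℝ} (hk : k ≠ 0) {q₁ q₂ : E} (h₁ : ⟪q₁, q₁⟫ = 1)
    (h₂ : ⟪q₁, q₂⟫ = 0) : -(2 * k) * ⟪q₁, q₂ - (2 * k)⁻¹ • q₁⟫ = 1 := by
  simp only [inner_sub_right, real_inner_smul_right, h₁, h₂]
  field_simp
  ring

lemma proj_preimage (k : ℝ) {q₁ q₂ : E} (h₁ : ⟪q₁, q₁⟫ = 1) :
    proj k (q₁, q₂ - (2 * k)⁻¹ • q₁) = (q₁, q₂) := by
  have hn : ‖q₁‖ = 1 := by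
    rw [← pow_eq_one_iff_of_nonneg (norm_nonneg q₁) two_ne_zero, ← real_inner_self_eq_norm_sq, h₁]
  simp only [proj, hn, inv_one, one_smul, one_pow, mul_one, sub_add_cancel]

lemma proj_smul_smul_inv (k : ℝ) {c : ℝ} (hc : 0 < c) (u v : E) :
    proj k (c • u, c⁻¹ • v) = proj k (u, v) := by
  simp only [proj, norm_smul, Real.norm_of_nonneg hc.le, smul_smul, Prod.mk.injEq]
  by_cases hu : ‖u‖ = 0
  · simp [norm_eq_zero.mp hu]
  · constructor
    · congr 1
      field_simp
    · match_scalars <;> field_simp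

lemma exists_smul_of_proj_eq {k : ℝ} {u v u' v' : E} (hu : u ≠ 0) (hu' : u' ≠ 0)
    (h : proj k (u, v) = proj k (u', v')) : ∃ c : ℝ, 0 < c ∧ u' = c • u ∧ v' = c⁻¹ • v := by
  have hn : 0 < ‖u‖ := norm_pos_iff.mpr hu
  have hn' : 0 < ‖u'‖ := norm_pos_iff.mpr hu'
  set c := ‖u'‖ / ‖u‖ with hc
  have hc₀ : 0 < c := div_pos hn' hn
  simp only [proj, Prod.mk.injEq] at h
  obtain ⟨h₁, h₂⟩ := h
  have hu'c : u' = c • u := by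
    rw [hc, div_eq_mul_inv, ← smul_smul, h₁, smul_inv_smul₀ hn'.ne']
  have hcu : ‖u'‖ = c * ‖u‖ := by rw [hc, div_mul_cancel₀ _ hn.ne']
  have hcorr : ‖u'‖ • (2 * k * ‖u'‖ ^ 2)⁻¹ • u' = ‖u‖ • (2 * k * ‖u‖ ^ 2)⁻¹ • u := by
    rw [hcu, hu'c, smul_smul, smul_smul, smul_smul]
    congr 1
    field_simp
  rw [smul_add, smul_add, hcorr] at h₂
  refine ⟨c, hc₀, hu'c, ?_⟩
  rw [hc, inv_div, div_eq_inv_mul, ← smul_smul, add_right_cancel h₂, inv_smul_smul₀ hn'.ne']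

lemma exists_exp_iff_exists_pos {k : ℝ} (hk : k ≠ 0) {u v u' v' : E} :
    (∃ t : ℝ, u' = Real.exp (k * t) • u ∧ v' = Real.exp (-(k * t)) • v) ↔
      ∃ c : ℝ, 0 < c ∧ u' = c • u ∧ v' = c⁻¹ • v := by
  constructor
  · rintro ⟨t, h₁, h₂⟩
    exact ⟨Real.exp (k * t), Real.exp_pos _, h₁, Real.exp_neg (k * t) ▸ h₂⟩
  · rintro ⟨c, hc, h₁, h₂⟩
    refine ⟨Real.log c / k, ?_⟩
    rw [mul_div_cancel₀ _ hk, Real.exp_neg, Real.exp_log hc]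
    exact ⟨h₁, h₂⟩

lemma proj_eq_proj_iff {k : ℝ} (hk : k ≠ 0) {u v u' v' : E} (hu : u ≠ 0) (hu' : u' ≠ 0) :
    proj k (u, v) = proj k (u', v') ↔
      ∃ t : ℝ, u' = Real.exp (k * t) • u ∧ v' = Real.exp (-(k * t)) • v := by
  rw [exists_exp_iff_exists_pos hk]
  refine ⟨exists_smul_of_proj_eq hu hu', ?_⟩
  rintro ⟨c, hc, rfl, rfl⟩
  exact (proj_smul_smul_inv k hc u v).symm

end SphereTangentProj

open SphereTangentProj in
/-- The map π(u,v) = (u/‖u‖, ‖u‖(v + u/(2k‖u‖²))) maps Σ = {-2k(u·v) = 1} onto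
TS^n = {u'·u' = 1, u'·v' = 0}, and identifies exactly the orbits
(u,v) ↦ (e^{kt}u, e^{-kt}v). -/
theorem stmt_12 (n : ℕ) (k : ℝ) (hk : 0 < k)
    (f : (EuclideanSpace ℝ (Fin (n + 1))) × (EuclideanSpace ℝ (Fin (n + 1))) →
      (EuclideanSpace ℝ (Fin (n + 1))) × (EuclideanSpace ℝ (Fin (n + 1))))
    (hf : ∀ u v, f (u, v) = (‖u‖⁻¹ • u, ‖u‖ • (v + (2 * k * ‖u‖ ^ 2)⁻¹ • u))) :
    (∀ p : (EuclideanSpace ℝ (Fin (n + 1))) × (EuclideanSpace ℝ (Fin (n + 1))),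
      -(2 * k) * (inner ℝ p.1 p.2 : ℝ) = 1 →
        (inner ℝ (f p).1 (f p).1 : ℝ) = 1 ∧ (inner ℝ (f p).1 (f p).2 : ℝ) = 0) ∧
    (∀ q : (EuclideanSpace ℝ (Fin (n + 1))) × (EuclideanSpace ℝ (Fin (n + 1))),
      (inner ℝ q.1 q.1 : ℝ) = 1 → (inner ℝ q.1 q.2 : ℝ) = 0 →
        ∃ p, -(2 * k) * (inner ℝ p.1 p.2 : ℝ) = 1 ∧ f p = q) ∧
    (∀ p p' : (EuclideanSpace ℝ (Fin (n + 1))) × (EuclideanSpace ℝ (Fin (n + 1))),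
      -(2 * k) * (inner ℝ p.1 p.2 : ℝ) = 1 → -(2 * k) * (inner ℝ p'.1 p'.2 : ℝ) = 1 →
        (f p = f p' ↔
          ∃ t : ℝ, p'.1 = Real.exp (k * t) • p.1 ∧ p'.2 = Real.exp (-(k * t)) • p.2)) := by
  obtain rfl : f = proj k := funext fun p => hf p.1 p.2
  refine ⟨fun p h => proj_mem_tangent h, ?_, ?_⟩
  · rintro ⟨q₁, q₂⟩ h₁ h₂
    exact ⟨_, constraint_preimage hk.ne' h₁ h₂, proj_preimage k h₁⟩
  · rintro ⟨u, v⟩ ⟨u', v'⟩ h h'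
    exact proj_eq_proj_iff hk.ne' (ne_zero_of_constraint h) (ne_zero_of_constraint h')
end
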